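/- arXiv:2110.05282 — 8 statements merged into one kernel-verified Lean document; each statement's English description precedes it below -/
import Mathlib

section
/- Let W ∈ ℝ^{n×n} be symmetric and doubly stochastic (nonnegative entries, W𝟙 = 𝟙 = Wᵀ𝟙), and suppose some power W^ℓ has all entries positive. Then the spectral norm of W − (1/n)𝟙𝟙ᵀ is strictly less than 1. -/
open Matrix Finset
open scoped InnerProductSpace

section aux

variable {n : ℕ}

private lemma enorm_sq (x : EuclideanSpace ℝ (Fin n)) : ‖x‖ ^ 2 = ∑ i, (x i) ^ 2 := by
  rw [EuclideanSpace.norm_eq, Real.sq_sqrt (by positivity)]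
  simp [sq_abs]

private lemma le_of_sq_le_sq'' {a b : ℝ} (h : a ^ 2 ≤ b ^ 2) (hb : 0 ≤ b) : a ≤ b := by
  nlinarith [sq_nonneg (a - b), sq_nonneg (a + b)]

private lemma contract_sq (W : Matrix (Fin n) (Fin n) ℝ)
    (hnonneg : ∀ i j, 0 ≤ W i j)
    (hrow : W.mulVec (fun _ => (1 : ℝ)) = fun _ => 1)
    (hcol : Matrix.vecMul (fun _ => (1 : ℝ)) W = fun _ => 1)
    (v : Fin n → ℝ) :
    ∑ i, (W.mulVec v i) ^ 2 ≤ ∑ i, (v i) ^ 2 := by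
  have hrow' : ∀ i, ∑ j, W i j = 1 := by
    intro i
    have := congrFun hrow i
    simpa [Matrix.mulVec, dotProduct] using this
  have hcol' : ∀ j, ∑ i, W i j = 1 := by
    intro j
    have := congrFun hcol j
    simpa [Matrix.vecMul, dotProduct] using this
  have h1 : ∀ i, (W.mulVec v i) ^ 2 ≤ ∑ j, W i j * (v j) ^ 2 := by
    intro i
    have hc := Finset.sum_mul_sq_le_sq_mul_sq Finset.univ
      (fun j => Real.sqrt (W i j)) (fun j => Real.sqrt (W i j) * v j)
    have e1 : ∀ j, Real.sqrt (W i j) * (Real.sqrt (W i j) * v j) = W i j * v j := by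
      intro j
      rw [← mul_assoc, Real.mul_self_sqrt (hnonneg i j)]
    have e2 : ∀ j, Real.sqrt (W i j) ^ 2 = W i j := fun j => Real.sq_sqrt (hnonneg i j)
    have e3 : ∀ j, (Real.sqrt (W i j) * v j) ^ 2 = W i j * (v j) ^ 2 := by
      intro j
      rw [mul_pow, e2]
    simp only [e1, e3] at hc
    calc (W.mulVec v i) ^ 2 = (∑ j, W i j * v j) ^ 2 := by
          simp [Matrix.mulVec, dotProduct]
      _ ≤ (∑ j, Real.sqrt (W i j) ^ 2) * ∑ j, W i j * (v j) ^ 2 := hc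
      _ = ∑ j, W i j * (v j) ^ 2 := by
          simp only [e2]; rw [hrow' i, one_mul]
  calc ∑ i, (W.mulVec v i) ^ 2 ≤ ∑ i, ∑ j, W i j * (v j) ^ 2 :=
        Finset.sum_le_sum fun i _ => h1 i
    _ = ∑ j, (∑ i, W i j) * (v j) ^ 2 := by
        rw [Finset.sum_comm]
        simp [Finset.sum_mul]
    _ = ∑ j, (v j) ^ 2 := by simp [hcol']

/-- A positive row-stochastic matrix fixing a zero-sum vector forces it to be zero. -/
private lemma fixed_zero (hn : 0 < n) (A : Matrix (Fin n) (Fin n) ℝ)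
    (hpos : ∀ i j, 0 < A i j)
    (hrow : A.mulVec (fun _ => (1 : ℝ)) = fun _ => 1)
    (v : Fin n → ℝ) (hfix : A.mulVec v = v) (hsum : ∑ i, v i = 0) :
    v = 0 := by
  have hrow' : ∀ i, ∑ j, A i j = 1 := by
    intro i
    have := congrFun hrow i
    simpa [Matrix.mulVec, dotProduct] using this
  haveI : Nonempty (Fin n) := ⟨⟨0, hn⟩⟩
  obtain ⟨i₀, -, hmax⟩ := Finset.exists_max_image Finset.univ v ⟨Classical.arbitrary _, by simp⟩
  set m := v i₀ with hm
  have hle : ∀ j, v j ≤ m := fun j => hmax j (by simp)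
  have hconst : ∀ j, v j = m := by
    by_contra hcon
    push_neg at hcon
    obtain ⟨j₀, hj₀⟩ := hcon
    have hj₀' : v j₀ < m := lt_of_le_of_ne (hle j₀) hj₀
    have hlt : ∑ j, A i₀ j * v j < ∑ j, A i₀ j * m := by
      refine Finset.sum_lt_sum (fun j _ => mul_le_mul_of_nonneg_left (hle j) (hpos i₀ j).le)
        ⟨j₀, by simp, mul_lt_mul_of_pos_left hj₀' (hpos i₀ j₀)⟩
    have heq : ∑ j, A i₀ j * v j = m := by
      have := congrFun hfix i₀
      simpa [Matrix.mulVec, dotProduct, hm] using this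
    have heq2 : ∑ j, A i₀ j * m = m := by
      rw [← Finset.sum_mul, hrow' i₀, one_mul]
    rw [heq, heq2] at hlt
    exact lt_irrefl m hlt
  have hm0 : m = 0 := by
    have hs' : (n : ℝ) * m = 0 := by
      rw [← hsum, Finset.sum_congr rfl fun i _ => hconst i, Finset.sum_const,
        Finset.card_univ, Fintype.card_fin, nsmul_eq_mul]
    rcases mul_eq_zero.mp hs' with h | h
    · exact absurd h (Nat.cast_ne_zero.mpr hn.ne')
    · exact h
  funext j
  simpa [hm0] using hconst j

end aux

/-- If W is symmetric, doubly stochastic, and some power W^ℓ has all entries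
positive, then the spectral norm of W − (1/n)𝟙𝟙ᵀ is strictly less than 1. -/
theorem stmt4 {n : ℕ} (hn : 0 < n) (W : Matrix (Fin n) (Fin n) ℝ)
    (hsymm : W.IsSymm) (hnonneg : ∀ i j, 0 ≤ W i j)
    (hrow : W.mulVec (fun _ => (1 : ℝ)) = fun _ => 1)
    (hcol : Matrix.vecMul (fun _ => (1 : ℝ)) W = fun _ => 1)
    (ℓ : ℕ) (hℓ : 0 < ℓ) (hpos : ∀ i j, 0 < (W ^ ℓ) i j) :
    ‖Matrix.toEuclideanCLM (𝕜 := ℝ) (n := Fin n) (W - Matrix.of fun _ _ => (1 : ℝ) / n)‖ < 1 := by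
  haveI : Nonempty (Fin n) := ⟨⟨0, hn⟩⟩
  set T : EuclideanSpace ℝ (Fin n) →L[ℝ] EuclideanSpace ℝ (Fin n) := Matrix.toEuclideanCLM (𝕜 := ℝ) W with hT
  set P : EuclideanSpace ℝ (Fin n) →L[ℝ] EuclideanSpace ℝ (Fin n) := Matrix.toEuclideanCLM (𝕜 := ℝ) (Matrix.of fun _ _ => (1 : ℝ) / n) with hP
  have happly : ∀ (A : Matrix (Fin n) (Fin n) ℝ) (x : EuclideanSpace ℝ (Fin n)) (i : Fin n),
      (Matrix.toEuclideanCLM (𝕜 := ℝ) A x) i = A.mulVec (fun j => x j) i := fun A x i => rfl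
  -- step 1 : contraction
  have step1 : ∀ x : EuclideanSpace ℝ (Fin n), ‖T x‖ ≤ ‖x‖ := by
    intro x
    have hsq : ‖T x‖ ^ 2 ≤ ‖x‖ ^ 2 := by
      rw [enorm_sq, enorm_sq]
      have := contract_sq W hnonneg hrow hcol (fun j => x j)
      exact this
    exact le_of_sq_le_sq'' hsq (norm_nonneg _)
  -- self-adjointness
  have hherm : W.IsHermitian := by
    rw [Matrix.IsHermitian]; ext i j; simpa using congrFun (congrFun hsymm i) j
  have hsa : ∀ x y : EuclideanSpace ℝ (Fin n), ⟪T x, y⟫_ℝ = ⟪x, T y⟫_ℝ := by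
    intro x y
    exact (Matrix.isHermitian_iff_isSymmetric.mp hherm) x y
  -- sum of (T x) = sum of x (columns sum to 1)
  have hsumT : ∀ x : EuclideanSpace ℝ (Fin n), (∑ i, T x i) = ∑ i, x i := by
    intro x
    have hcol' : ∀ j, ∑ i, W i j = 1 := by
      intro j
      have := congrFun hcol j
      simpa [Matrix.vecMul, dotProduct] using this
    calc (∑ i, T x i) = ∑ i, ∑ j, W i j * x j := by
          show ∑ i, (W.mulVec (fun j => x j)) i = _
          simp [Matrix.mulVec, dotProduct]
      _ = ∑ j, (∑ i, W i j) * x j := by rw [Finset.sum_comm]; simp [Finset.sum_mul]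
      _ = ∑ j, x j := by simp [hcol']
  -- key claim : strict contraction on zero-sum vectors
  have key : ∀ y : EuclideanSpace ℝ (Fin n), y ≠ 0 → (∑ i, y i) = 0 → ‖T y‖ < ‖y‖ := by
    intro y hy hsum
    rcases lt_or_eq_of_le (step1 y) with h | heq
    · exact h
    exfalso
    have hy' : ‖y‖ ≠ 0 := norm_ne_zero_iff.mpr hy
    -- T (T y) = y
    have hinner : ⟪T (T y), y⟫_ℝ = ‖y‖ * ‖y‖ := by
      rw [hsa, real_inner_self_eq_norm_mul_norm, heq]
    have hle2 : ‖T (T y)‖ ≤ ‖y‖ := (step1 (T y)).trans_eq heq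
    have hCS : ⟪T (T y), y⟫_ℝ ≤ ‖T (T y)‖ * ‖y‖ := real_inner_le_norm _ _
    have hnorm2 : ‖T (T y)‖ = ‖y‖ := by
      have h1 : ‖y‖ * ‖y‖ ≤ ‖T (T y)‖ * ‖y‖ := hinner ▸ hCS
      have h2 : ‖y‖ ≤ ‖T (T y)‖ := le_of_mul_le_mul_right h1 (lt_of_le_of_ne (norm_nonneg _) (Ne.symm hy'))
      exact le_antisymm hle2 h2
    have hfix2 : T (T y) = y := by
      have : ⟪T (T y), y⟫_ℝ = ‖T (T y)‖ * ‖y‖ := by rw [hnorm2, hinner]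
      have h := inner_eq_norm_mul_iff_real.mp this
      rw [hnorm2] at h
      exact smul_right_injective (EuclideanSpace ℝ (Fin n)) hy' h
    -- iterate : (W^2)^ℓ fixes y
    have hfixM : (W * W).mulVec (fun j => y j) = fun j => y j := by
      funext i
      have := congrFun (congrArg (fun z : EuclideanSpace ℝ (Fin n) => (fun j => z j)) hfix2) i
      simp only [happly] at this
      rw [← this, ← Matrix.mulVec_mulVec]
      rfl
    have hiter : ∀ k : ℕ, ((W * W) ^ k).mulVec (fun j => y j) = fun j => y j := by
      intro k
      induction k with
      | zero => simp
      | succ k ih =>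
        rw [pow_succ, ← Matrix.mulVec_mulVec, hfixM, ih]
    -- (W*W)^ℓ = W^ℓ * W^ℓ has positive entries
    have hA : (W * W) ^ ℓ = W ^ ℓ * W ^ ℓ := by
      rw [← pow_two, ← pow_mul, two_mul, pow_add]
    have hApos : ∀ i j, 0 < ((W * W) ^ ℓ) i j := by
      intro i j
      rw [hA]
      have : (W ^ ℓ * W ^ ℓ) i j = ∑ k, (W ^ ℓ) i k * (W ^ ℓ) k j := rfl
      rw [this]
      exact Finset.sum_pos (fun k _ => mul_pos (hpos i k) (hpos k j)) Finset.univ_nonempty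
    -- row sums of powers
    have hrowpow : ∀ k : ℕ, ((W * W) ^ k).mulVec (fun _ => (1 : ℝ)) = fun _ => 1 := by
      intro k
      induction k with
      | zero => simp [Matrix.mulVec, dotProduct]
      | succ k ih =>
        rw [pow_succ, ← Matrix.mulVec_mulVec, ← Matrix.mulVec_mulVec, hrow, hrow, ih]
    have := fixed_zero hn ((W * W) ^ ℓ) hApos (hrowpow ℓ) (fun j => y j) (hiter ℓ) hsum
    apply hy
    ext i
    exact congrFun this i
  -- the operator M := T - P is strictly contracting on all nonzero vectors
  set M : EuclideanSpace ℝ (Fin n) →L[ℝ] EuclideanSpace ℝ (Fin n) := Matrix.toEuclideanCLM (𝕜 := ℝ) (W - Matrix.of fun _ _ => (1 : ℝ) / n) with hM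
  have hMsub : M = T - P := by rw [hM, hT, hP, map_sub]
  have hPapply : ∀ x : EuclideanSpace ℝ (Fin n), ∀ i, (P x) i = (∑ j, x j) / n := by
    intro x i
    rw [hP, happly]
    simp only [Matrix.mulVec, dotProduct, Matrix.of_apply]
    rw [Finset.sum_div]
    exact Finset.sum_congr rfl fun j _ => by rw [div_mul_eq_mul_div, one_mul]
  have hstrict : ∀ x : EuclideanSpace ℝ (Fin n), x ≠ 0 → ‖M x‖ < ‖x‖ := by
    intro x hx
    set s : ℝ := (∑ i, x i) / n with hs
    set u : EuclideanSpace ℝ (Fin n) := (WithLp.equiv 2 (Fin n → ℝ)).symm (fun _ => 1) with hu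
    have hui : ∀ i, u i = 1 := fun i => rfl
    set y : EuclideanSpace ℝ (Fin n) := x - s • u with hy
    have hyi : ∀ i, y i = x i - s := by
      intro i
      have h1 : y i = x i - s * u i := rfl
      rw [h1, hui, mul_one]
    have hysum : (∑ i, y i) = 0 := by
      have h1 : (∑ i, y i) = (∑ i, x i) - n * s := by
        simp only [hyi]
        rw [Finset.sum_sub_distrib, Finset.sum_const, Finset.card_univ, Fintype.card_fin,
          nsmul_eq_mul]
      rw [h1, hs]
      field_simp
      ring
    have hufun : (fun j => u j) = fun _ => (1 : ℝ) := funext hui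
    have hTu : T u = u := by
      ext i
      rw [hT, happly, hufun, hrow, hui i]
    have husum : (∑ j, u j) = (n : ℝ) := by
      rw [Finset.sum_congr rfl fun j _ => hui j, Finset.sum_const, Finset.card_univ,
        Fintype.card_fin, nsmul_eq_mul, mul_one]
    have hPu : P u = u := by
      ext i
      rw [hPapply, husum, hui i]
      exact div_self (Nat.cast_ne_zero.mpr hn.ne')
    have hPy : P y = 0 := by
      ext i
      rw [hPapply, hysum, zero_div]
      rfl
    have hxdec : x = s • u + y := by rw [hy]; abel
    have hMx : M x = T y := by
      rw [hMsub]
      simp only [ContinuousLinearMap.sub_apply]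
      rw [hxdec, map_add, map_add, ContinuousLinearMap.map_smul,
        ContinuousLinearMap.map_smul, hTu, hPu, hPy]
      abel
    have hyle : ‖y‖ ≤ ‖x‖ := by
      have hinner0 : ⟪s • u, y⟫_ℝ = 0 := by
        have : ⟪u, y⟫_ℝ = ∑ i, y i := by
          simp [PiLp.inner_apply, hui]
        rw [real_inner_smul_left, this, hysum, mul_zero]
      have hx2 : ‖x‖ ^ 2 = ‖s • u‖ ^ 2 + ‖y‖ ^ 2 := by
        rw [hxdec, norm_add_sq_real, hinner0]
        ring
      have : ‖y‖ ^ 2 ≤ ‖x‖ ^ 2 := by rw [hx2]; nlinarith [sq_nonneg ‖s • u‖]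
      exact le_of_sq_le_sq'' this (norm_nonneg _)
    by_cases hy0 : y = 0
    · rw [hMx, hy0, map_zero, norm_zero]
      exact norm_pos_iff.mpr hx
    · rw [hMx]
      exact lt_of_lt_of_le (key y hy0 hysum) hyle
  -- conclude via compactness of the sphere
  have hsph : (Metric.sphere (0 : EuclideanSpace ℝ (Fin n)) 1).Nonempty := NormedSpace.sphere_nonempty.mpr zero_le_one
  obtain ⟨x₀, hx₀, hmax⟩ := (isCompact_sphere (0 : EuclideanSpace ℝ (Fin n)) 1).exists_isMaxOn hsph
    (M.continuous.norm.continuousOn)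
  have hx₀n : ‖x₀‖ = 1 := by simpa using hx₀
  have hr : ‖M x₀‖ < 1 := by
    have := hstrict x₀ (by
      intro h
      rw [h, norm_zero] at hx₀n
      exact one_ne_zero hx₀n.symm)
    rwa [hx₀n] at this
  have hbound : ‖M‖ ≤ ‖M x₀‖ := by
    apply ContinuousLinearMap.opNorm_le_bound M (norm_nonneg _)
    intro x
    by_cases hx : x = 0
    · simp [hx]
    · have hxn : ‖x‖ ≠ 0 := norm_ne_zero_iff.mpr hx
      have hz : (‖x‖⁻¹ • x) ∈ Metric.sphere (0 : EuclideanSpace ℝ (Fin n)) 1 := by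
        simp [norm_smul, abs_of_nonneg (norm_nonneg x), inv_mul_cancel₀ hxn]
      have h2 : ‖M (‖x‖⁻¹ • x)‖ ≤ ‖M x₀‖ := hmax hz
      rw [ContinuousLinearMap.map_smul, norm_smul, norm_inv, norm_norm] at h2
      calc ‖M x‖ = ‖x‖ * (‖x‖⁻¹ * ‖M x‖) := by field_simp
        _ ≤ ‖x‖ * ‖M x₀‖ := mul_le_mul_of_nonneg_left h2 (norm_nonneg x)
        _ = ‖M x₀‖ * ‖x‖ := mul_comm _ _
  exact lt_of_le_of_lt hbound hr
end

section
/- Suppose each f_i : ℝ^d → ℝ is convex and L-smooth for i = 1,…,n. Let x₁,…,x_n ∈ ℝ^d, let x̄ = (1/n)∑_i x_i, d̄ = (1/n)∑_i ∇f_i(x_i), and f = (1/n)∑_i f_i. Then for any a, b ∈ ℝ^d: f(a) ≤ f(b) + ⟨d̄, a − b⟩ + L‖x̄ − a‖² + (L/n)∑_{i=1}^n ‖x_i − x̄‖². -/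
/-!
Smoothness from `xᵢ` to `a` and convexity from `xᵢ` to `b` compare `fᵢ a` with `fᵢ b` through
`∇fᵢ(xᵢ)` at the cost `(L/2)‖a - xᵢ‖²`; splitting `a - xᵢ` through `x̄` with
`‖u + v‖² ≤ 2‖u‖² + 2‖v‖²` and averaging over `i` gives the two quadratic terms.
-/

open Finset

section Gradient

variable {E : Type*} [NormedAddCommGroup E] [InnerProductSpace ℝ E] [CompleteSpace E]

/-- Restricting `f` to the line through `p` and `q` reduces this to the one-variable fact that
the derivative of a convex function is at most its slopes. -/
theorem ConvexOn.add_inner_gradient_le {f : E → ℝ} (hconv : ConvexOn ℝ Set.univ f)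
    {p : E} (hdiff : DifferentiableAt ℝ f p) (q : E) :
    f p + inner ℝ (gradient f p) (q - p) ≤ f q := by
  set g : ℝ → ℝ := f ∘ AffineMap.lineMap p q
  have hg_conv : ConvexOn ℝ Set.univ g := by
    simpa using hconv.comp_affineMap (AffineMap.lineMap p q)
  have hline : HasDerivAt (AffineMap.lineMap p q : ℝ → E) (q - p) 0 := by
    simpa using AffineMap.hasDerivAt_lineMap (a := p) (b := q) (x := (0 : ℝ))
  have hf : HasFDerivAt f (InnerProductSpace.toDual ℝ E (gradient f p))
      (AffineMap.lineMap p q (0 : ℝ)) := by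
    simpa using hasGradientAt_iff_hasFDerivAt.mp hdiff.hasGradientAt
  have hg_deriv : HasDerivAt g (inner ℝ (gradient f p) (q - p)) 0 := by
    simpa using hf.comp_hasDerivAt (0 : ℝ) hline
  have hslope := hg_conv.le_slope_of_hasDerivAt (Set.mem_univ 0) (Set.mem_univ 1) one_pos hg_deriv
  simp only [slope_def_field, g, Function.comp_apply, AffineMap.lineMap_apply_zero,
    AffineMap.lineMap_apply_one, sub_zero, div_one] at hslope
  linarith

theorem ConvexOn.le_add_inner_gradient_add_sq_norm {f : E → ℝ} {L : ℝ}
    (hconv : ConvexOn ℝ Set.univ f) (hdiff : Differentiable ℝ f)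
    (hsmooth : ∀ x y, f x ≤ f y + inner ℝ (gradient f y) (x - y) + L / 2 * ‖x - y‖ ^ 2)
    (a b y : E) :
    f a ≤ f b + inner ℝ (gradient f y) (a - b) + L / 2 * ‖a - y‖ ^ 2 := by
  have hupper := hsmooth a y
  have hlower := hconv.add_inner_gradient_le (hdiff y) b
  have hsplit : inner ℝ (gradient f y) (a - y)
      = inner ℝ (gradient f y) (a - b) + inner ℝ (gradient f y) (b - y) := by
    rw [← inner_add_right, sub_add_sub_cancel]
  linarith

end Gradient

theorem norm_sub_sq_le_two_mul_add {E : Type*} [SeminormedAddCommGroup E] (a y c : E) :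
    ‖a - y‖ ^ 2 ≤ 2 * ‖c - a‖ ^ 2 + 2 * ‖y - c‖ ^ 2 := by
  calc ‖a - y‖ ^ 2 ≤ (‖c - a‖ + ‖y - c‖) ^ 2 := by
        gcongr
        simpa [norm_sub_rev, add_comm] using norm_sub_le_norm_sub_add_norm_sub a c y
    _ ≤ 2 * ‖c - a‖ ^ 2 + 2 * ‖y - c‖ ^ 2 := by linarith [add_sq_le (a := ‖c - a‖) (b := ‖y - c‖)]

theorem sum_le_sum_add_inner_sum_gradient {E ι : Type*} [NormedAddCommGroup E]
    [InnerProductSpace ℝ E] [CompleteSpace E] (s : Finset ι) {L : ℝ} (hL : 0 ≤ L)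
    (f : ι → E → ℝ) (hdiff : ∀ i, Differentiable ℝ (f i))
    (hconv : ∀ i, ConvexOn ℝ Set.univ (f i))
    (hsmooth : ∀ i x y, f i x ≤ f i y + inner ℝ (gradient (f i) y) (x - y) + L / 2 * ‖x - y‖ ^ 2)
    (x : ι → E) (a b c : E) :
    ∑ i ∈ s, f i a ≤ ∑ i ∈ s, f i b + inner ℝ (∑ i ∈ s, gradient (f i) (x i)) (a - b)
      + L * (#s * ‖c - a‖ ^ 2) + L * ∑ i ∈ s, ‖x i - c‖ ^ 2 := by
  calc ∑ i ∈ s, f i a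
      ≤ ∑ i ∈ s, (f i b + inner ℝ (gradient (f i) (x i)) (a - b)
          + L * (‖c - a‖ ^ 2 + ‖x i - c‖ ^ 2)) := by
        gcongr with i
        refine ((hconv i).le_add_inner_gradient_add_sq_norm (hdiff i) (hsmooth i) a b (x i)).trans ?_
        have := mul_le_mul_of_nonneg_left (norm_sub_sq_le_two_mul_add a (x i) c) hL
        linarith
    _ = _ := by
        simp only [sum_add_distrib, ← mul_sum, sum_inner, sum_const, nsmul_eq_mul]
        ring

/-- Inexact-gradient descent lemma: for convex L-smooth f_i with
x̄ = (1/n)∑ x_i, d̄ = (1/n)∑ ∇f_i(x_i), f = (1/n)∑ f_i, and any a, b: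
f(a) ≤ f(b) + ⟨d̄, a−b⟩ + L‖x̄−a‖² + (L/n)∑‖x_i−x̄‖². -/
theorem stmt6 {d n : ℕ} (hn : 0 < n) (L : ℝ) (hL : 0 < L)
    (fs : Fin n → EuclideanSpace ℝ (Fin d) → ℝ)
    (hdiff : ∀ i, Differentiable ℝ (fs i))
    (hconv : ∀ i, ConvexOn ℝ Set.univ (fs i))
    (hsmooth : ∀ i x y, fs i x ≤
      fs i y + (inner ℝ (gradient (fs i) y) (x - y) : ℝ) + L / 2 * ‖x - y‖ ^ 2)
    (x : Fin n → EuclideanSpace ℝ (Fin d)) (a b : EuclideanSpace ℝ (Fin d)) :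
    (1 / (n : ℝ)) * ∑ i, fs i a ≤
      (1 / (n : ℝ)) * ∑ i, fs i b
        + (inner ℝ ((1 / (n : ℝ)) • ∑ i, gradient (fs i) (x i)) (a - b) : ℝ)
        + L * ‖(1 / (n : ℝ)) • (∑ i, x i) - a‖ ^ 2
        + L / (n : ℝ) * ∑ i, ‖x i - (1 / (n : ℝ)) • (∑ j, x j)‖ ^ 2 := by
  have hsum := sum_le_sum_add_inner_sum_gradient univ hL.le fs hdiff hconv hsmooth x a b
    ((1 / (n : ℝ)) • ∑ j, x j)
  have hn' : (0 : ℝ) < n := Nat.cast_pos.mpr hn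
  rw [card_univ, Fintype.card_fin] at hsum
  rw [real_inner_smul_left]
  have haverage := mul_le_mul_of_nonneg_left hsum (one_div_pos.mpr hn').le
  refine haverage.trans_eq ?_
  field_simp
end

section
/- Suppose each f_i : ℝ^d → ℝ is μ-strongly convex and L-smooth (μ ≤ L), for i = 1,…,n. Let x₁,…,x_n ∈ ℝ^d, x̄ = (1/n)∑_i x_i, d̄ = (1/n)∑_i ∇f_i(x_i), f = (1/n)∑_i f_i, and let x* be the minimizer of f. Then f(x̄) ≤ f(x*) + ⟨d̄, x̄ − x*⟩ − (μ/4)‖x̄ − x*‖² + (L/n)∑_{i=1}^n ‖x_i − x̄‖². -/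
/-!
Fix `i` and write `g = ∇fᵢ(xᵢ)`. Smoothness of `fᵢ` from `xᵢ` to `x̄` and strong convexity of `fᵢ`
from `xᵢ` to `x*`, both linearised at the same point `xᵢ`, combine to
`fᵢ(x̄) ≤ fᵢ(x*) + ⟨g, x̄ - x*⟩ + (L/2)‖xᵢ - x̄‖² - (μ/2)‖xᵢ - x*‖²`.
Since `‖x̄ - x*‖² ≤ 2‖x̄ - xᵢ‖² + 2‖xᵢ - x*‖²` and `μ ≤ L`, the last two terms are at most
`L‖xᵢ - x̄‖² - (μ/4)‖x̄ - x*‖²`. Averaging over `i` gives the theorem.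
-/

open Finset

theorem norm_add_sq_le_two_mul {E : Type*} [SeminormedAddCommGroup E] (a b : E) :
    ‖a + b‖ ^ 2 ≤ 2 * (‖a‖ ^ 2 + ‖b‖ ^ 2) :=
  (pow_le_pow_left₀ (norm_nonneg _) (norm_add_le a b) 2).trans add_sq_le

theorem le_add_inner_sub_of_smooth_of_strongConvex {E : Type*} [NormedAddCommGroup E]
    [InnerProductSpace ℝ E] {f : E → ℝ} {g y z w : E} {μ L : ℝ} (hμ : 0 ≤ μ) (hμL : μ ≤ L)
    (hsmooth : f z ≤ f y + inner ℝ g (z - y) + L / 2 * ‖z - y‖ ^ 2)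
    (hsc : f y + inner ℝ g (w - y) + μ / 2 * ‖w - y‖ ^ 2 ≤ f w) :
    f z ≤ f w + inner ℝ g (z - w) - μ / 4 * ‖z - w‖ ^ 2 + L * ‖y - z‖ ^ 2 := by
  have hinner : inner ℝ g (z - y) = inner ℝ g (z - w) + inner ℝ g (w - y) := by
    rw [← inner_add_right, sub_add_sub_cancel]
  have hsplit : ‖z - w‖ ^ 2 ≤ 2 * (‖y - z‖ ^ 2 + ‖w - y‖ ^ 2) := by
    simpa only [sub_add_sub_cancel, norm_sub_rev z y, norm_sub_rev y w] using
      norm_add_sq_le_two_mul (z - y) (y - w)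
  rw [norm_sub_rev z y] at hsmooth
  nlinarith [mul_le_mul_of_nonneg_left hsplit hμ,
    mul_le_mul_of_nonneg_right hμL (sq_nonneg ‖y - z‖)]

theorem stmt7_general {d n : ℕ} (hn : 0 < n) (μ L : ℝ) (hμ : 0 < μ) (hμL : μ ≤ L)
    (fs : Fin n → EuclideanSpace ℝ (Fin d) → ℝ)
    (hsc : ∀ i x y, fs i y + (inner ℝ (gradient (fs i) y) (x - y) : ℝ)
        + μ / 2 * ‖x - y‖ ^ 2 ≤ fs i x)
    (hsmooth : ∀ i x y, fs i x ≤
      fs i y + (inner ℝ (gradient (fs i) y) (x - y) : ℝ) + L / 2 * ‖x - y‖ ^ 2)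
    (x : Fin n → EuclideanSpace ℝ (Fin d)) (xstar : EuclideanSpace ℝ (Fin d)) :
    (1 / (n : ℝ)) * ∑ i, fs i ((1 / (n : ℝ)) • ∑ j, x j) ≤
      (1 / (n : ℝ)) * ∑ i, fs i xstar
        + (inner ℝ ((1 / (n : ℝ)) • ∑ i, gradient (fs i) (x i))
            ((1 / (n : ℝ)) • (∑ j, x j) - xstar) : ℝ)
        - μ / 4 * ‖(1 / (n : ℝ)) • (∑ j, x j) - xstar‖ ^ 2
        + L / (n : ℝ) * ∑ i, ‖x i - (1 / (n : ℝ)) • (∑ j, x j)‖ ^ 2 := by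
  set xb := (1 / (n : ℝ)) • ∑ j, x j
  have hn0 : (n : ℝ) ≠ 0 := by positivity
  calc (1 / (n : ℝ)) * ∑ i, fs i xb
      ≤ (1 / (n : ℝ)) * ∑ i, (fs i xstar + inner ℝ (gradient (fs i) (x i)) (xb - xstar)
          - μ / 4 * ‖xb - xstar‖ ^ 2 + L * ‖x i - xb‖ ^ 2) := by
        gcongr with i
        exact le_add_inner_sub_of_smooth_of_strongConvex hμ.le hμL
          (hsmooth i xb (x i)) (hsc i xstar (x i))
    _ = _ := by
        simp only [sum_add_distrib, sum_sub_distrib, sum_const, card_univ, Fintype.card_fin,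
          nsmul_eq_mul, ← mul_sum, real_inner_smul_left, sum_inner]
        field_simp

/-- For μ-strongly convex, L-smooth f_i (μ ≤ L), with x̄, d̄, f as usual and
x* the minimizer of f:
f(x̄) ≤ f(x*) + ⟨d̄, x̄ − x*⟩ − (μ/4)‖x̄ − x*‖² + (L/n)∑‖x_i − x̄‖². -/
theorem stmt7 {d n : ℕ} (hn : 0 < n) (μ L : ℝ) (hμ : 0 < μ) (hμL : μ ≤ L)
    (fs : Fin n → EuclideanSpace ℝ (Fin d) → ℝ)
    (hdiff : ∀ i, Differentiable ℝ (fs i))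
    (hsc : ∀ i x y, fs i y + (inner ℝ (gradient (fs i) y) (x - y) : ℝ)
        + μ / 2 * ‖x - y‖ ^ 2 ≤ fs i x)
    (hsmooth : ∀ i x y, fs i x ≤
      fs i y + (inner ℝ (gradient (fs i) y) (x - y) : ℝ) + L / 2 * ‖x - y‖ ^ 2)
    (x : Fin n → EuclideanSpace ℝ (Fin d)) (xstar : EuclideanSpace ℝ (Fin d))
    (hmin : ∀ y, (1 / (n : ℝ)) * ∑ i, fs i xstar ≤ (1 / (n : ℝ)) * ∑ i, fs i y) :
    (1 / (n : ℝ)) * ∑ i, fs i ((1 / (n : ℝ)) • ∑ j, x j) ≤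
      (1 / (n : ℝ)) * ∑ i, fs i xstar
        + (inner ℝ ((1 / (n : ℝ)) • ∑ i, gradient (fs i) (x i))
            ((1 / (n : ℝ)) • (∑ j, x j) - xstar) : ℝ)
        - μ / 4 * ‖(1 / (n : ℝ)) • (∑ j, x j) - xstar‖ ^ 2
        + L / (n : ℝ) * ∑ i, ‖x i - (1 / (n : ℝ)) • (∑ j, x j)‖ ^ 2 :=
  stmt7_general hn μ L hμ hμL fs hsc hsmooth x xstar
end

section
/- Suppose each f_i : ℝ^d → ℝ is convex and L-smooth, i = 1,…,n. Let x₁,…,x_n, q₁,…,q_n ∈ ℝ^d, set x̄ = (1/n)∑ x_i, q̄ = (1/n)∑ q_i, d̄ = (1/n)∑ ∇f_i(x_i), f = (1/n)∑ f_i, and let u ∈ ℝ^d be any point with u = q̄. Then ∑_{i=1}^n ‖∇f_i(x_i) − ∇f_i(q_i)‖² ≤ 4Ln(f(u) − f(x̄) − ⟨d̄, u − x̄⟩) + 2L²(∑_{i=1}^n ‖x_i − x̄‖² + ∑_{i=1}^n ‖q_i − q̄‖²). -/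
/-!
For each `i`, split `∇fᵢ(xᵢ) - ∇fᵢ(qᵢ)` through `∇fᵢ(u)`. Cocoercivity of the gradient of a
convex `L`-smooth function bounds `‖∇fᵢ(u) - ∇fᵢ(xᵢ)‖²` by `2L` times the Bregman divergence
`fᵢ(u) - fᵢ(xᵢ) - ⟪∇fᵢ(xᵢ), u - xᵢ⟫`, and Lipschitz continuity bounds `‖∇fᵢ(u) - ∇fᵢ(qᵢ)‖`
by `L‖u - qᵢ‖`. Moving the base point of the divergence from `xᵢ` to `x̄` costs at most
`L/2 ‖x̄ - xᵢ‖²` by smoothness, and the recentred divergences average to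
`f(u) - f(x̄) - ⟪d̄, u - x̄⟫`.
-/

open Finset

variable {F : Type*} [NormedAddCommGroup F] [InnerProductSpace ℝ F] [CompleteSpace F]

theorem ConvexOn.add_inner_gradient_le_s9 {f : F → ℝ} (hf : ConvexOn ℝ Set.univ f) {x : F}
    (hx : DifferentiableAt ℝ f x) (y : F) :
    f x + inner ℝ (gradient f x) (y - x) ≤ f y := by
  let g : ℝ → ℝ := f ∘ AffineMap.lineMap x y
  have hg : ConvexOn ℝ Set.univ g := by
    simpa using hf.comp_affineMap (AffineMap.lineMap x y)
  have hg' : HasDerivAt g (inner ℝ (gradient f x) (y - x)) 0 := by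
    have hline : HasDerivAt (AffineMap.lineMap x y : ℝ → F) (y - x) 0 :=
      AffineMap.hasDerivAt_lineMap
    have hfx : HasFDerivAt f (InnerProductSpace.toDual ℝ F (gradient f x))
        (AffineMap.lineMap x y (0 : ℝ)) := by
      simpa using hasGradientAt_iff_hasFDerivAt.mp hx.hasGradientAt
    simpa using hfx.comp_hasDerivAt (0 : ℝ) hline
  have hslope := hg.le_slope_of_hasDerivAt (Set.mem_univ 0) (Set.mem_univ 1) one_pos hg'
  simp only [g, slope_def_field, Function.comp_apply, AffineMap.lineMap_apply_zero,
    AffineMap.lineMap_apply_one, sub_zero, div_one] at hslope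
  linarith

theorem sq_norm_gradient_sub_le_bregman {f : F → ℝ} {L : ℝ} (hL : 0 < L)
    (hdiff : Differentiable ℝ f) (hconv : ConvexOn ℝ Set.univ f)
    (hsmooth : ∀ a b, f a ≤ f b + inner ℝ (gradient f b) (a - b) + L / 2 * ‖a - b‖ ^ 2)
    (x y : F) :
    ‖gradient f y - gradient f x‖ ^ 2 ≤
      2 * L * (f y - f x - inner ℝ (gradient f x) (y - x)) := by
  set g := gradient f y - gradient f x
  -- `z` minimises the quadratic upper model of `f` at `y`
  set z := y - L⁻¹ • g with hz
  have key : f x + inner ℝ (gradient f x) (z - x) ≤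
      f y + inner ℝ (gradient f y) (z - y) + L / 2 * ‖z - y‖ ^ 2 :=
    (hconv.add_inner_gradient_le_s9 (hdiff x) z).trans (hsmooth z y)
  have hzx : z - x = (y - x) - L⁻¹ • g := by rw [hz]; abel
  have hzy : z - y = -(L⁻¹ • g) := by rw [hz]; abel
  have hg : ‖g‖ ^ 2 = inner ℝ (gradient f y) g - inner ℝ (gradient f x) g := by
    rw [← inner_sub_left, real_inner_self_eq_norm_sq]
  rw [hzx, hzy, inner_sub_right, inner_neg_right, real_inner_smul_right, real_inner_smul_right,
    norm_neg, norm_smul, mul_pow, Real.norm_of_nonneg (inv_nonneg.2 hL.le)] at key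
  field_simp at key
  nlinarith

theorem norm_gradient_sub_le {f : F → ℝ} {L : ℝ} (hL : 0 < L) (hdiff : Differentiable ℝ f)
    (hconv : ConvexOn ℝ Set.univ f)
    (hsmooth : ∀ a b, f a ≤ f b + inner ℝ (gradient f b) (a - b) + L / 2 * ‖a - b‖ ^ 2)
    (x y : F) :
    ‖gradient f y - gradient f x‖ ≤ L * ‖y - x‖ := by
  have hxy := sq_norm_gradient_sub_le_bregman hL hdiff hconv hsmooth x y
  have hyx := sq_norm_gradient_sub_le_bregman hL hdiff hconv hsmooth y x
  rw [norm_sub_rev (gradient f x)] at hyx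
  have hmono : ‖gradient f y - gradient f x‖ ^ 2 ≤
      L * inner ℝ (gradient f y - gradient f x) (y - x) := by
    rw [← neg_sub y x, inner_neg_right] at hyx
    rw [inner_sub_left]
    linarith
  have hcs := mul_le_mul_of_nonneg_left
    (real_inner_le_norm (gradient f y - gradient f x) (y - x)) hL.le
  nlinarith [norm_nonneg (gradient f y - gradient f x), mul_nonneg hL.le (norm_nonneg (y - x))]

theorem sq_norm_gradient_sub_le_shifted_bregman {f : F → ℝ} {L : ℝ} (hL : 0 < L)
    (hdiff : Differentiable ℝ f) (hconv : ConvexOn ℝ Set.univ f)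
    (hsmooth : ∀ a b, f a ≤ f b + inner ℝ (gradient f b) (a - b) + L / 2 * ‖a - b‖ ^ 2)
    (x q u c : F) :
    ‖gradient f x - gradient f q‖ ^ 2 ≤
      4 * L * (f u - f c - inner ℝ (gradient f x) (u - c))
        + 2 * L ^ 2 * ‖x - c‖ ^ 2 + 2 * L ^ 2 * ‖q - u‖ ^ 2 := by
  have hsplit : ‖gradient f x - gradient f q‖ ^ 2 ≤
      2 * ‖gradient f u - gradient f x‖ ^ 2 + 2 * ‖gradient f u - gradient f q‖ ^ 2 := by
    have := parallelogram_law_with_norm ℝ (gradient f u - gradient f q)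
      (gradient f u - gradient f x)
    rw [sub_sub_sub_cancel_left] at this
    nlinarith [sq_nonneg ‖gradient f u - gradient f q + (gradient f u - gradient f x)‖]
  have hxu := sq_norm_gradient_sub_le_bregman hL hdiff hconv hsmooth x u
  have hqu : ‖gradient f u - gradient f q‖ ^ 2 ≤ L ^ 2 * ‖q - u‖ ^ 2 := by
    rw [norm_sub_rev q, ← mul_pow]
    exact pow_le_pow_left₀ (norm_nonneg _) (norm_gradient_sub_le hL hdiff hconv hsmooth q u) 2
  have hcx := hsmooth c x
  have hinner : inner ℝ (gradient f x) (u - x) =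
      inner ℝ (gradient f x) (u - c) + inner ℝ (gradient f x) (c - x) := by
    rw [← inner_add_right, sub_add_sub_cancel]
  rw [norm_sub_rev c] at hcx
  rw [hinner] at hxu
  nlinarith

theorem natCast_mul_one_div_mul_sum {n : ℕ} (a : Fin n → ℝ) :
    (n : ℝ) * ((1 / (n : ℝ)) * ∑ i, a i) = ∑ i, a i := by
  rcases n.eq_zero_or_pos with rfl | hn
  · simp
  · field_simp

theorem stmt9_general {d n : ℕ} (L : ℝ) (hL : 0 < L)
    (fs : Fin n → EuclideanSpace ℝ (Fin d) → ℝ)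
    (hdiff : ∀ i, Differentiable ℝ (fs i))
    (hconv : ∀ i, ConvexOn ℝ Set.univ (fs i))
    (hsmooth : ∀ i x y, fs i x ≤
      fs i y + (inner ℝ (gradient (fs i) y) (x - y) : ℝ) + L / 2 * ‖x - y‖ ^ 2)
    (x q : Fin n → EuclideanSpace ℝ (Fin d)) (u : EuclideanSpace ℝ (Fin d))
    (hu : u = (1 / (n : ℝ)) • ∑ i, q i) :
    ∑ i, ‖gradient (fs i) (x i) - gradient (fs i) (q i)‖ ^ 2 ≤
      4 * L * n * ((1 / (n : ℝ)) * ∑ i, fs i u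
          - (1 / (n : ℝ)) * ∑ i, fs i ((1 / (n : ℝ)) • ∑ j, x j)
          - (inner ℝ ((1 / (n : ℝ)) • ∑ i, gradient (fs i) (x i))
              (u - (1 / (n : ℝ)) • ∑ j, x j) : ℝ))
        + 2 * L ^ 2 * (∑ i, ‖x i - (1 / (n : ℝ)) • ∑ j, x j‖ ^ 2
            + ∑ i, ‖q i - (1 / (n : ℝ)) • ∑ j, q j‖ ^ 2) := by
  rw [← hu]
  set c := (1 / (n : ℝ)) • ∑ j, x j
  calc ∑ i, ‖gradient (fs i) (x i) - gradient (fs i) (q i)‖ ^ 2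
      ≤ ∑ i, (4 * L * (fs i u - fs i c - inner ℝ (gradient (fs i) (x i)) (u - c))
          + 2 * L ^ 2 * ‖x i - c‖ ^ 2 + 2 * L ^ 2 * ‖q i - u‖ ^ 2) :=
        sum_le_sum fun i _ ↦
          sq_norm_gradient_sub_le_shifted_bregman hL (hdiff i) (hconv i) (hsmooth i) _ _ u c
    _ = _ := by
        rw [real_inner_smul_left, sum_inner, ← mul_sub, ← mul_sub, ← sum_sub_distrib,
          ← sum_sub_distrib, mul_assoc, natCast_mul_one_div_mul_sum]
        simp only [sum_add_distrib, ← mul_sum]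
        ring

/-- Bound on the gradient difference: for convex L-smooth f_i, points x_i, q_i,
u = q̄ = (1/n)∑ q_i, x̄ = (1/n)∑ x_i, d̄ = (1/n)∑ ∇f_i(x_i), f = (1/n)∑ f_i:
∑‖∇f_i(x_i) − ∇f_i(q_i)‖² ≤ 4Ln(f(u) − f(x̄) − ⟨d̄, u − x̄⟩)
  + 2L²(∑‖x_i − x̄‖² + ∑‖q_i − q̄‖²). -/
theorem stmt9 {d n : ℕ} (hn : 0 < n) (L : ℝ) (hL : 0 < L)
    (fs : Fin n → EuclideanSpace ℝ (Fin d) → ℝ)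
    (hdiff : ∀ i, Differentiable ℝ (fs i))
    (hconv : ∀ i, ConvexOn ℝ Set.univ (fs i))
    (hsmooth : ∀ i x y, fs i x ≤
      fs i y + (inner ℝ (gradient (fs i) y) (x - y) : ℝ) + L / 2 * ‖x - y‖ ^ 2)
    (x q : Fin n → EuclideanSpace ℝ (Fin d)) (u : EuclideanSpace ℝ (Fin d))
    (hu : u = (1 / (n : ℝ)) • ∑ i, q i) :
    ∑ i, ‖gradient (fs i) (x i) - gradient (fs i) (q i)‖ ^ 2 ≤
      4 * L * n * ((1 / (n : ℝ)) * ∑ i, fs i u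
          - (1 / (n : ℝ)) * ∑ i, fs i ((1 / (n : ℝ)) • ∑ j, x j)
          - (inner ℝ ((1 / (n : ℝ)) • ∑ i, gradient (fs i) (x i))
              (u - (1 / (n : ℝ)) • ∑ j, x j) : ℝ))
        + 2 * L ^ 2 * (∑ i, ‖x i - (1 / (n : ℝ)) • ∑ j, x j‖ ^ 2
            + ∑ i, ‖q i - (1 / (n : ℝ)) • ∑ j, q j‖ ^ 2) :=
  stmt9_general L hL fs hdiff hconv hsmooth x q u hu
end

section
/- Let δ ∈ (0,1), θ = (1 − √(1−(1−δ)²))/(1 + √(1−(1−δ)²)), and η̃ ∈ [(1+θ)/2, 1). Then for every x ∈ [0, 1−δ]: x²(1+η̃)² − 4η̃ < 0. -/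
/-!
Write c = 1 - δ and s = √(1 - c²), so that c² = (1 - s)(1 + s) and θ = (1 - s)/(1 + s).
As a quadratic in η, c²(1 + η)² - 4η then has the roots θ and θ⁻¹, so it is negative for
θ < η < θ⁻¹, which covers θ < (1 + θ)/2 ≤ η̃ < 1. Since the expression increases with x² it
suffices to take x = c.
-/

theorem one_sub_sq_mul_one_add_sq_sub_four_mul {R : Type*} [CommRing R] (s η : R) :
    (1 - s ^ 2) * (1 + η) ^ 2 - 4 * η = ((1 + s) * η - (1 - s)) * ((1 - s) * η - (1 + s)) := by
  ring

theorem one_sub_sq_mul_one_add_sq_sub_four_mul_neg {s η : ℝ} (hs : 0 ≤ s)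
    (hθη : (1 - s) / (1 + s) < η) (hη : η < 1) :
    (1 - s ^ 2) * (1 + η) ^ 2 - 4 * η < 0 := by
  rw [one_sub_sq_mul_one_add_sq_sub_four_mul]
  have hθη' : 1 - s < (1 + s) * η := by rwa [div_lt_iff₀' (by linarith)] at hθη
  have hη' : (1 - s) * η < 1 + s := by nlinarith
  exact mul_neg_of_pos_of_neg (by linarith) (by linarith)

/-- Negativity of the discriminant: for δ ∈ (0,1), θ as in loopless Chebyshev
acceleration and η̃ ∈ [(1+θ)/2, 1), every x ∈ [0, 1−δ] satisfies
x²(1+η̃)² − 4η̃ < 0. -/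
theorem stmt11 (δ θ ηt : ℝ) (h0 : 0 < δ) (h1 : δ < 1)
    (hθ : θ = (1 - Real.sqrt (1 - (1 - δ) ^ 2)) / (1 + Real.sqrt (1 - (1 - δ) ^ 2)))
    (hη1 : (1 + θ) / 2 ≤ ηt) (hη2 : ηt < 1) :
    ∀ x : ℝ, 0 ≤ x → x ≤ 1 - δ → x ^ 2 * (1 + ηt) ^ 2 - 4 * ηt < 0 := by
  intro x hx hxc
  set s := Real.sqrt (1 - (1 - δ) ^ 2)
  have hc : (1 - δ) ^ 2 < 1 := by nlinarith
  have hs_sq : s ^ 2 = 1 - (1 - δ) ^ 2 := Real.sq_sqrt (by linarith)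
  have hs_pos : 0 < s := Real.sqrt_pos.2 (by linarith)
  have hθ_lt : θ < 1 := hθ ▸ (div_lt_one (by linarith)).2 (by linarith)
  calc x ^ 2 * (1 + ηt) ^ 2 - 4 * ηt ≤ (1 - δ) ^ 2 * (1 + ηt) ^ 2 - 4 * ηt := by gcongr
    _ = (1 - s ^ 2) * (1 + ηt) ^ 2 - 4 * ηt := by rw [hs_sq, sub_sub_cancel]
    _ < 0 := one_sub_sq_mul_one_add_sq_sub_four_mul_neg hs_pos.le
        (hθ ▸ by linarith) hη2
end

section
/- Let δ ∈ (0,1), θ = (1 − √(1−(1−δ)²))/(1 + √(1−(1−δ)²)), η̃ ∈ [(1+θ)/2, 1), and define polynomials T_0(x) = T_1(x) = 1, T_{k+2}(x) = (1+η̃) x T_{k+1}(x) − η̃ T_k(x) for k ≥ 0. Then for all k ≥ 0 and all x ∈ [0, 1−δ]: T_k(x)² ≤ 7 η̃^k. -/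
/-!
With `a = (1 + η̃) x`, the recurrence is `u (n+2) = a u (n+1) - η̃ u n`, whose characteristic
roots `r₁, r₂` satisfy `r₁ + r₂ = a`, `r₁ r₂ = η̃`. The quadratic form
`v² - a v w + η̃ w² = (v - r₁ w)(v - r₂ w)` is therefore multiplied by `η̃` at every step, and
completing the square gives `4 η̃ (v² - a v w + η̃ w²) ≥ (4 η̃ - a²) v²`. Since the form equals
`(1 + η̃)(1 - x)` on `(T₁, T₀)`, this yields `T_{k+1}² ≤ 4 η̃^{k+1} (1 + η̃)(1 - x) / (4 η̃ - a²)`.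
The choice of `η̃` makes `4 (1 + η̃)(1 - x) ≤ 7 (4 η̃ - a²)` on `[0, 1 - δ]`: the difference is
concave in `x`, so it suffices to check it at `x = 0` (where `η̃ ≥ 1/2` suffices) and at
`x = 1 - δ` (where `1 - η̃ ≤ η̃ √(1 - (1 - δ)²)` is exactly what is needed).
-/

def recForm (a η v w : ℝ) : ℝ := v ^ 2 - a * v * w + η * w ^ 2

section Recurrence

variable {a η : ℝ} {u : ℕ → ℝ}

theorem recForm_succ (hu : ∀ n, u (n + 2) = a * u (n + 1) - η * u n) (n : ℕ) :
    recForm a η (u (n + 2)) (u (n + 1)) = η * recForm a η (u (n + 1)) (u n) := by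
  rw [recForm, recForm, hu]
  ring

theorem recForm_eq_pow_mul (hu : ∀ n, u (n + 2) = a * u (n + 1) - η * u n) (n : ℕ) :
    recForm a η (u (n + 1)) (u n) = η ^ n * recForm a η (u 1) (u 0) := by
  induction n with
  | zero => ring
  | succ n ih => rw [recForm_succ hu, ih, pow_succ]; ring

theorem mul_sq_le_four_mul_recForm (a η v w : ℝ) :
    (4 * η - a ^ 2) * v ^ 2 ≤ 4 * η * recForm a η v w := by
  have h : 4 * η * recForm a η v w = (4 * η - a ^ 2) * v ^ 2 + (a * v - 2 * η * w) ^ 2 := by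
    rw [recForm]; ring
  rw [h]
  exact le_add_of_nonneg_right (sq_nonneg _)

theorem sq_le_of_recurrence {C : ℝ} (hu : ∀ n, u (n + 2) = a * u (n + 1) - η * u n)
    (hη : 0 ≤ η) (ha : a ^ 2 < 4 * η) (hC : 4 * recForm a η (u 1) (u 0) ≤ C * (4 * η - a ^ 2))
    (n : ℕ) : u (n + 1) ^ 2 ≤ C * η ^ (n + 1) := by
  have hpos : 0 < 4 * η - a ^ 2 := by linarith
  refine le_of_mul_le_mul_left ?_ hpos
  calc (4 * η - a ^ 2) * u (n + 1) ^ 2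
      ≤ 4 * η * recForm a η (u (n + 1)) (u n) := mul_sq_le_four_mul_recForm a η _ _
    _ = η ^ (n + 1) * (4 * recForm a η (u 1) (u 0)) := by
        rw [recForm_eq_pow_mul hu, pow_succ]; ring
    _ ≤ η ^ (n + 1) * (C * (4 * η - a ^ 2)) := by gcongr
    _ = (4 * η - a ^ 2) * (C * η ^ (n + 1)) := by ring

end Recurrence

theorem nonneg_of_concave_quadratic {c q p b x : ℝ} (hc : 0 ≤ c) (h₀ : 0 ≤ p)
    (hb : 0 ≤ -c * b ^ 2 + q * b + p) (hx₀ : 0 ≤ x) (hxb : x ≤ b) :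
    0 ≤ -c * x ^ 2 + q * x + p := by
  rcases hx₀.eq_or_lt with rfl | hx
  · simpa using h₀
  have interpolation : b * (-c * x ^ 2 + q * x + p) =
      (b - x) * p + x * (-c * b ^ 2 + q * b + p) + c * b * (x * (b - x)) := by ring
  have hbx : 0 ≤ b - x := by linarith
  have hprod : 0 ≤ b * (-c * x ^ 2 + q * x + p) := by
    rw [interpolation]
    exact add_nonneg (add_nonneg (mul_nonneg hbx h₀) (mul_nonneg hx.le hb))
      (mul_nonneg (mul_nonneg hc (hx.le.trans hxb)) (mul_nonneg hx.le hbx))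
  exact nonneg_of_mul_nonneg_right hprod (hx.trans_le hxb)

section Parameters

variable {δ η s : ℝ}

theorem one_le_mul_one_add_of_half_one_add_div_le (hs : 0 ≤ s) (h : (1 + (1 - s) / (1 + s)) / 2 ≤ η) :
    1 ≤ η * (1 + s) := by
  have hs1 : 0 < 1 + s := by linarith
  have : (1 + (1 - s) / (1 + s)) / 2 = 1 / (1 + s) := by field_simp; ring
  rwa [this, div_le_iff₀ hs1] at h

theorem four_mul_le_seven_mul_at_one_sub (hs : s ^ 2 = 1 - (1 - δ) ^ 2) (hδ₀ : 0 ≤ δ) (hδ₁ : δ ≤ 1)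
    (hη : 1 ≤ η * (1 + s)) (hη₁ : η ≤ 1) (hη₀ : 0 ≤ η) :
    4 * (1 + η) * δ ≤ 7 * (4 * η - ((1 + η) * (1 - δ)) ^ 2) := by
  have hδs : δ ≤ s ^ 2 := by nlinarith
  have hsq : (1 - η) ^ 2 ≤ η ^ 2 * s ^ 2 := by nlinarith
  calc 4 * (1 + η) * δ ≤ 4 * (1 + η) * s ^ 2 := by gcongr
    _ ≤ 7 * (1 + 2 * η) * s ^ 2 := by gcongr <;> linarith
    _ = 7 * ((1 + η) ^ 2 * s ^ 2 - η ^ 2 * s ^ 2) := by ring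
    _ ≤ 7 * ((1 + η) ^ 2 * s ^ 2 - (1 - η) ^ 2) := by gcongr
    _ = 7 * (4 * η - ((1 + η) * (1 - δ)) ^ 2) := by rw [hs]; ring

theorem four_mul_le_seven_mul {x : ℝ} (hs : s ^ 2 = 1 - (1 - δ) ^ 2) (hs₀ : 0 ≤ s)
    (hδ₀ : 0 ≤ δ) (hδ₁ : δ ≤ 1) (hη : 1 ≤ η * (1 + s)) (hη₁ : η ≤ 1)
    (hx₀ : 0 ≤ x) (hx : x ≤ 1 - δ) :
    4 * (1 + η) * (1 - x) ≤ 7 * (4 * η - ((1 + η) * x) ^ 2) := by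
  have hs₁ : s ≤ 1 := by nlinarith
  have hη₀ : 1 / 2 ≤ η := by nlinarith
  have hend := four_mul_le_seven_mul_at_one_sub hs hδ₀ hδ₁ hη hη₁ (by linarith)
  have hdiff := nonneg_of_concave_quadratic (c := 7 * (1 + η) ^ 2) (q := 4 * (1 + η))
    (p := 24 * η - 4) (by positivity) (by linarith) (by linarith) hx₀ hx
  linarith

end Parameters

/-- Loopless Chebyshev acceleration polynomial bound: with T₀ = T₁ = 1 and
T_{k+2}(x) = (1+η̃)x T_{k+1}(x) − η̃ T_k(x), for all k and all x ∈ [0, 1−δ],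
T_k(x)² ≤ 7 η̃^k. -/
theorem stmt12 (δ θ ηt : ℝ) (h0 : 0 < δ) (h1 : δ < 1)
    (hθ : θ = (1 - Real.sqrt (1 - (1 - δ) ^ 2)) / (1 + Real.sqrt (1 - (1 - δ) ^ 2)))
    (hη1 : (1 + θ) / 2 ≤ ηt) (hη2 : ηt < 1)
    (T : ℕ → ℝ → ℝ)
    (hT0 : ∀ x, T 0 x = 1) (hT1 : ∀ x, T 1 x = 1)
    (hTrec : ∀ k x, T (k + 2) x = (1 + ηt) * x * T (k + 1) x - ηt * T k x) :
    ∀ (k : ℕ) (x : ℝ), 0 ≤ x → x ≤ 1 - δ → (T k x) ^ 2 ≤ 7 * ηt ^ k := by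
  intro k x hx₀ hx
  set s := Real.sqrt (1 - (1 - δ) ^ 2)
  have hs₀ : 0 ≤ s := Real.sqrt_nonneg _
  have hs : s ^ 2 = 1 - (1 - δ) ^ 2 := Real.sq_sqrt (by nlinarith)
  have hη := one_le_mul_one_add_of_half_one_add_div_le hs₀ (hθ ▸ hη1)
  have hkey := four_mul_le_seven_mul hs hs₀ h0.le h1.le hη hη2.le hx₀ hx
  have hform : recForm ((1 + ηt) * x) ηt (T 1 x) (T 0 x) = (1 + ηt) * (1 - x) := by
    rw [recForm, hT0, hT1]; ring
  have hη₀ : 0 < ηt := by nlinarith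
  cases k with
  | zero => rw [hT0]; norm_num
  | succ n =>
    refine sq_le_of_recurrence (u := (T · x)) (a := (1 + ηt) * x) (hTrec · x) hη₀.le ?_
      (by rw [hform]; linarith) n
    nlinarith [mul_pos (by linarith : 0 < 1 + ηt) (by linarith : 0 < 1 - x)]
end

section
/- Let δ ∈ (0,1), θ = (1 − √(1−(1−δ)²))/(1 + √(1−(1−δ)²)), η̃ ∈ [(1+θ)/2, 1), z ∈ (0,1] with z² ≥ δ − δ²/2. Let r₁ = √(η̃ − z²) + iz, r₂ = √(η̃ − z²) − iz. Then |(1 − r₁)/(r₁ − r₂)|² ≤ 7/4. -/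
/-! With `s = √(2δ - δ²)` the hypothesis on `η̃` reads `η̃ ≥ 1/(1+s)`, so `1 - η̃ ≤ s` and
`s² ≤ 2z²`. Writing `a = √(η̃ - z²)`, the quotient has squared modulus
`((1 - a)² + z²) / (4z²)`, and `1 - a ≤ 1 - a² ≤ s + z²` gives `(1 - a)² ≤ 2s² + 2z⁴ ≤ 6z²`. -/

open Complex

lemma norm_sq_one_sub_div_sub_conj (a z : ℝ) :
    ‖(1 - ((a : ℂ) + z * I)) / (((a : ℂ) + z * I) - ((a : ℂ) - z * I))‖ ^ 2
      = ((1 - a) ^ 2 + z ^ 2) / (4 * z ^ 2) := by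
  rw [norm_div, div_pow, Complex.sq_norm, Complex.sq_norm, Complex.normSq_apply,
    Complex.normSq_apply]
  simp only [sub_re, sub_im, add_re, add_im, one_re, one_im, ofReal_re, ofReal_im, mul_re,
    mul_im, I_re, I_im]
  ring_nf

lemma one_sub_le_of_one_add_div_two_le {s η : ℝ} (hs : 0 ≤ s)
    (h : (1 + (1 - s) / (1 + s)) / 2 ≤ η) : 1 - η ≤ s := by
  have hmid : (1 + (1 - s) / (1 + s)) / 2 = 1 - s / (1 + s) := by
    field_simp
    ring
  have hfrac : s / (1 + s) ≤ s := div_le_self hs (by linarith)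
  linarith

lemma one_sub_sqrt_sub_sq_sq_le {s η z : ℝ} (hs : 0 ≤ s) (hsz : s ^ 2 ≤ 2 * z ^ 2)
    (hηs : 1 - η ≤ s) (hη : η ≤ 1) : (1 - √(η - z ^ 2)) ^ 2 ≤ 6 * z ^ 2 := by
  rcases le_or_gt (z ^ 2) η with hzη | hηz
  · set a := √(η - z ^ 2) with ha
    have ha0 : 0 ≤ a := Real.sqrt_nonneg _
    have ha2 : a ^ 2 = η - z ^ 2 := Real.sq_sqrt (by linarith)
    have ha1 : a ≤ 1 := by nlinarith
    -- `a ≤ 1` gives `1 - a ≤ 1 - a² = 1 - η + z²`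
    have hlin : 1 - a ≤ s + z ^ 2 := by nlinarith
    calc (1 - a) ^ 2 ≤ (s + z ^ 2) ^ 2 := pow_le_pow_left₀ (by linarith) hlin 2
      _ ≤ 2 * s ^ 2 + 2 * (z ^ 2) ^ 2 := by nlinarith [sq_nonneg (s - z ^ 2)]
      _ ≤ 6 * z ^ 2 := by nlinarith
  · rw [Real.sqrt_eq_zero'.mpr (by linarith)]
    nlinarith

theorem stmt14_general (δ θ ηt z : ℝ) (h0 : 0 < δ) (h1 : δ < 1)
    (hθ : θ = (1 - Real.sqrt (1 - (1 - δ) ^ 2)) / (1 + Real.sqrt (1 - (1 - δ) ^ 2)))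
    (hη1 : (1 + θ) / 2 ≤ ηt) (hη2 : ηt < 1)
    (hz0 : 0 < z) (hzδ : δ - δ ^ 2 / 2 ≤ z ^ 2)
    (r₁ r₂ : ℂ)
    (hr₁ : r₁ = (Real.sqrt (ηt - z ^ 2) : ℂ) + (z : ℂ) * Complex.I)
    (hr₂ : r₂ = (Real.sqrt (ηt - z ^ 2) : ℂ) - (z : ℂ) * Complex.I) :
    (‖(1 - r₁) / (r₁ - r₂)‖) ^ 2 ≤ 7 / 4 := by
  set s := √(1 - (1 - δ) ^ 2)
  have hs0 : 0 ≤ s := Real.sqrt_nonneg _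
  have hs2 : s ^ 2 = 2 * δ - δ ^ 2 := by
    rw [Real.sq_sqrt (by nlinarith)]
    ring
  have hηs : 1 - ηt ≤ s := one_sub_le_of_one_add_div_two_le hs0 (hθ ▸ hη1)
  have hkey := one_sub_sqrt_sub_sq_sq_le hs0 (by linarith) hηs hη2.le (z := z)
  rw [hr₁, hr₂, norm_sq_one_sub_div_sub_conj, div_le_iff₀ (by positivity)]
  linarith

/-- Bound on the coefficient in the loopless Chebyshev acceleration analysis:
|(1 − r₁)/(r₁ − r₂)|² ≤ 7/4. -/
theorem stmt14 (δ θ ηt z : ℝ) (h0 : 0 < δ) (h1 : δ < 1)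
    (hθ : θ = (1 - Real.sqrt (1 - (1 - δ) ^ 2)) / (1 + Real.sqrt (1 - (1 - δ) ^ 2)))
    (hη1 : (1 + θ) / 2 ≤ ηt) (hη2 : ηt < 1)
    (hz0 : 0 < z) (hz1 : z ≤ 1) (hzδ : δ - δ ^ 2 / 2 ≤ z ^ 2)
    (r₁ r₂ : ℂ)
    (hr₁ : r₁ = (Real.sqrt (ηt - z ^ 2) : ℂ) + (z : ℂ) * Complex.I)
    (hr₂ : r₂ = (Real.sqrt (ηt - z ^ 2) : ℂ) - (z : ℂ) * Complex.I) :
    (‖(1 - r₁) / (r₁ - r₂)‖) ^ 2 ≤ 7 / 4 :=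
  stmt14_general δ θ ηt z h0 h1 hθ hη1 hη2 hz0 hzδ r₁ r₂ hr₁ hr₂
end

section
/- Let W ∈ ℝ^{n×n} be symmetric, doubly stochastic, positive semidefinite, with eigenvalues 0 ≤ λ_n ≤ … ≤ λ₂ = 1−δ < λ₁ = 1 where δ ∈ (0,1). Let θ = (1 − √(1−(1−δ)²))/(1 + √(1−(1−δ)²)), η̃ = (1+θ)/2, and define the augmented 2n×2n matrix W̃ = [[(1+η̃)W, −η̃ I],[I, 0]]. Let Π̃ be the block-diagonal matrix diag(Π, Π) with Π = I − (1/n)𝟙𝟙ᵀ. Then for every A ∈ ℝ^{n×d} and every k ≥ 0: ‖Π̃ W̃^k Π̃ [A; A]‖_F² ≤ 14 (η̃)^k ‖ΠA‖_F², where [A; A] ∈ ℝ^{2n×d} stacks A on top of itself. -/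
set_option maxHeartbeats 1000000
set_option maxRecDepth 10000

/-- Squared Frobenius norm of a real matrix. -/
def frobSq {m d : Type*} [Fintype m] [Fintype d] (A : Matrix m d ℝ) : ℝ :=
  ∑ i, ∑ j, (A i j) ^ 2


/-- zero initial data stays zero -/
lemma scalarZero (a η : ℝ) (x y : ℕ → ℝ) (hx0 : x 0 = 0) (hy0 : y 0 = 0)
    (hxr : ∀ k, x (k+1) = a * x k - η * y k) (hyr : ∀ k, y (k+1) = x k) :
    ∀ k, x k = 0 ∧ y k = 0 := by
  intro k
  induction k with
  | zero => exact ⟨hx0, hy0⟩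
  | succ m ih =>
    refine ⟨?_, ?_⟩
    · rw [hxr, ih.1, ih.2]; ring
    · rw [hyr]; exact ih.1

lemma sqle (a b : ℝ) (ha : 0 ≤ a) (hb : 0 ≤ b) (h : a ^ 2 ≤ b ^ 2) : a ≤ b := by
  nlinarith [sq_nonneg (a - b), sq_nonneg (a + b)]

/-- the hard endpoint inequality -/
lemma endpointIneq (s η w : ℝ) (hs0 : 0 < s) (hs1 : s < 1)
    (hw0 : 0 < w) (hw2 : w ^ 2 = 1 - s ^ 2) (hη : η = 1 / (1 + s)) :
    7 * ((1 + η) * w) ^ 2 - 4 * ((1 + η) * w) + 4 - 24 * η ≤ 0 := by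
  have hs1' : (0:ℝ) < 1 + s := by linarith
  have hη0 : 0 < η := by rw [hη]; positivity
  have hηs : η * (1 + s) = 1 := by rw [hη]; field_simp
  have hη1 : η < 1 := by nlinarith
  have hηhalf : 1/2 < η := by nlinarith
  have hr0 : 0 < Real.sqrt η := Real.sqrt_pos.mpr hη0
  have hr2 : (Real.sqrt η) ^ 2 = η := Real.sq_sqrt hη0.le
  set r := Real.sqrt η with hrdef
  have hrge : 7/10 ≤ r := by nlinarith [sq_nonneg (r - 7/10)]
  have hrle : r ≤ 1 := by nlinarith [sq_nonneg (r - 1)]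
  have ht0 : 0 < Real.sqrt (1 + s) := Real.sqrt_pos.mpr hs1'
  have ht2 : (Real.sqrt (1 + s)) ^ 2 = 1 + s := Real.sq_sqrt hs1'.le
  set t := Real.sqrt (1 + s) with htdef
  have ht1 : 1 ≤ t := by nlinarith [sq_nonneg (t - 1)]
  have htle : t ^ 2 ≤ 2 := by nlinarith
  have hrt : r * t = 1 := by
    have h : (r * t) ^ 2 = 1 := by rw [mul_pow, hr2, ht2]; exact hηs
    nlinarith [mul_pos hr0 ht0, sq_nonneg (r * t - 1)]
  have hv0 : 0 ≤ Real.sqrt (1 - s) := Real.sqrt_nonneg _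
  have hv2 : (Real.sqrt (1 - s)) ^ 2 = 1 - s := Real.sq_sqrt (by linarith)
  set v := Real.sqrt (1 - s) with hvdef
  have hv1 : v ≤ 1 := by nlinarith [sq_nonneg (v - 1)]
  have hwvt : w = v * t := by
    have hz : (w - v * t) * (w + v * t) = 0 := by
      have : v ^ 2 * t ^ 2 = 1 - s ^ 2 := by rw [hv2, ht2]; ring
      nlinarith [this]
    rcases mul_eq_zero.mp hz with h | h
    · linarith
    · nlinarith [mul_nonneg hv0 ht0.le]
  set A := (1 + η) * w with hA
  have hA0 : 0 ≤ A := by positivity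
  -- 2 - (2+s) v ≥ 3 s^2 / 5
  have h2v : 3 * s ^ 2 / 5 ≤ 2 - (2 + s) * v := by
    have e1 : (2 - (2 + s) * v) * (2 + (2 + s) * v) = 3 * s ^ 2 + s ^ 3 := by
      have : (2 + s) ^ 2 * v ^ 2 = (2 + s) ^ 2 * (1 - s) := by rw [hv2]
      nlinarith [this]
    have e2 : 2 + (2 + s) * v ≤ 5 := by nlinarith [mul_nonneg hs0.le hv0]
    have e3 : 0 < 2 + (2 + s) * v := by nlinarith [mul_nonneg hs0.le hv0]
    have e4 : 0 < 2 - (2 + s) * v := by nlinarith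
    nlinarith [mul_le_mul_of_nonneg_left e2 e4.le]
  -- t^2 (2r - A) = t (2 - (2+s) v)
  have hkey : t ^ 2 * (2 * r - A) = t * (2 - (2 + s) * v) := by
    have h1 : (1 + η) * t ^ 2 = 2 + s := by rw [ht2]; nlinarith
    calc t ^ 2 * (2 * r - A) = 2 * (r * t) * t - ((1 + η) * t ^ 2) * (v * t) := by
          rw [hA, hwvt]; ring
      _ = t * (2 - (2 + s) * v) := by rw [hrt, h1]; ring
  have hu : 3 * s ^ 2 / 10 ≤ 2 * r - A := by
    have h5 : t * (3 * s ^ 2 / 5) ≤ t * (2 - (2 + s) * v) :=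
      mul_le_mul_of_nonneg_left h2v ht0.le
    have h6 : 3 * s ^ 2 / 5 ≤ t ^ 2 * (2 * r - A) := by
      rw [hkey]
      calc 3 * s ^ 2 / 5 = 1 * (3 * s ^ 2 / 5) := by ring
        _ ≤ t * (3 * s ^ 2 / 5) := by
            apply mul_le_mul_of_nonneg_right ht1; positivity
        _ ≤ t * (2 - (2 + s) * v) := h5
    have hpos : 0 ≤ 2 * r - A := by
      by_contra hc
      push_neg at hc
      have hneg : t ^ 2 * (2 * r - A) < 0 :=
        mul_neg_of_pos_of_neg (by positivity) (by linarith)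
      linarith [sq_nonneg s, h6, hneg]
    have h7 : 0 ≤ (2 - t ^ 2) * (2 * r - A) :=
      mul_nonneg (by linarith) hpos
    nlinarith [h6, h7]
  -- 1 - r ≤ s / 2
  have h1r : 1 - r ≤ s / 2 := by
    have e0 : 0 ≤ (3 - s) * s ^ 2 := mul_nonneg (by linarith) (sq_nonneg s)
    have h7 : (2 - s) ^ 2 * (1 + s) ≤ 4 * (η * (1 + s)) := by
      rw [hηs]; nlinarith [e0]
    have h8 : (2 - s) ^ 2 ≤ 4 * η :=
      le_of_mul_le_mul_right (by nlinarith [h7]) hs1'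
    have h9 : 2 - s ≤ 2 * r := by
      refine sqle _ _ (by linarith) (by linarith) ?_
      have : (2 * r) ^ 2 = 4 * η := by rw [mul_pow, hr2]; ring
      linarith [h8]
    linarith
  -- final combination
  have hid : 24 * η + 4 * A - 7 * A ^ 2 - 4
      = -4 * (1 - r) ^ 2 + (2 * r - A) * (14 * r - 4 + 7 * A) := by
    rw [← hr2]; ring
  have hge : (29:ℝ)/5 ≤ 14 * r - 4 + 7 * A := by linarith
  have hp : (3 * s ^ 2 / 10) * (29 / 5) ≤ (2 * r - A) * (14 * r - 4 + 7 * A) :=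
    mul_le_mul hu hge (by norm_num) (by nlinarith [sq_nonneg s])
  have hsq : (1 - r) ^ 2 ≤ (s / 2) ^ 2 := pow_le_pow_left₀ (by linarith) h1r 2
  have hsq' : (1 - r) ^ 2 ≤ s ^ 2 / 4 := by
    have e : (s / 2) ^ 2 = s ^ 2 / 4 := by ring
    linarith [hsq]
  have hp' : 87 / 50 * s ^ 2 ≤ (2 * r - A) * (14 * r - 4 + 7 * A) := by
    have e : (3 * s ^ 2 / 10) * ((29:ℝ) / 5) = 87 / 50 * s ^ 2 := by ring
    linarith [hp]
  linarith [hid, hp', hsq', sq_nonneg s]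

/-- Main scalar decay lemma -/
lemma scalarKey (s η w μ c : ℝ) (hs0 : 0 < s) (hs1 : s < 1)
    (hw0 : 0 < w) (hw2 : w ^ 2 = 1 - s ^ 2) (hη : η = 1 / (1 + s))
    (hμ0 : 0 ≤ μ) (hμw : μ ≤ w)
    (x y : ℕ → ℝ) (hx0 : x 0 = c) (hy0 : y 0 = c)
    (hxr : ∀ k, x (k+1) = (1 + η) * μ * x k - η * y k) (hyr : ∀ k, y (k+1) = x k)
    (k : ℕ) : x k ^ 2 + y k ^ 2 ≤ 14 * η ^ k * c ^ 2 := by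
  have hs1' : (0:ℝ) < 1 + s := by linarith
  have hη0 : 0 < η := by rw [hη]; positivity
  have hηs : η * (1 + s) = 1 := by rw [hη]; field_simp
  have hη1 : η < 1 := by nlinarith
  have hηhalf : 1/2 < η := by nlinarith
  set a := (1 + η) * μ with ha
  set A := (1 + η) * w with hA
  have ha0 : 0 ≤ a := by positivity
  have hA0 : 0 < A := by positivity
  have haA : a ≤ A := by
    apply mul_le_mul_of_nonneg_left hμw; positivity
  -- endpoint bounds
  have hg0 : (4:ℝ) - 24 * η ≤ 0 := by linarith
  have hgA : 7 * A ^ 2 - 4 * A + 4 - 24 * η ≤ 0 := by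
    rw [hA]; exact endpointIneq s η w hs0 hs1 hw0 hw2 hη
  have hga : 7 * a ^ 2 - 4 * a + 4 - 24 * η ≤ 0 := by
    have interp : A * (7 * a ^ 2 - 4 * a + 4 - 24 * η)
        ≤ (A - a) * (4 - 24 * η) + a * (7 * A ^ 2 - 4 * A + 4 - 24 * η) := by
      nlinarith [mul_nonneg (mul_nonneg ha0 hA0.le) (sub_nonneg.mpr haA)]
    have t1 : (A - a) * (4 - 24 * η) ≤ 0 :=
      mul_nonpos_of_nonneg_of_nonpos (by linarith) hg0
    have t2 : a * (7 * A ^ 2 - 4 * A + 4 - 24 * η) ≤ 0 :=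
      mul_nonpos_of_nonneg_of_nonpos ha0 hgA
    by_contra hc
    push_neg at hc
    nlinarith [mul_pos hA0 hc]
  -- 4η - a² > 0
  have hA1s : A * (1 + s) = (2 + s) * w := by
    rw [hA]; linear_combination w * hηs
  have hA2 : A ^ 2 * (1 + s) ^ 2 = (2 + s) ^ 2 * (1 - s ^ 2) := by
    linear_combination (A * (1 + s) + (2 + s) * w) * hA1s + (2 + s) ^ 2 * hw2
  have h5 : (2 + s) ^ 2 * (1 - s ^ 2) < 4 * (1 + s) := by
    have hpos : 0 < (1 + s) * (s ^ 2 * (3 + s)) := by positivity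
    nlinarith [hpos]
  have h4 : 4 * η * (1 + s) ^ 2 = 4 * (1 + s) := by linear_combination 4 * (1 + s) * hηs
  have hAlt : A ^ 2 < 4 * η := by
    have h6 : A ^ 2 * (1 + s) ^ 2 < (4 * η) * (1 + s) ^ 2 := by
      rw [hA2]; nlinarith [h5, h4]
    exact lt_of_mul_lt_mul_right h6 (by positivity)
  have hD : 0 < 4 * η - a ^ 2 := by
    have : a ^ 2 ≤ A ^ 2 := by nlinarith [haA, ha0]
    linarith
  -- the Lyapunov function
  have hq : ∀ m, x m ^ 2 - a * x m * y m + η * y m ^ 2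
      = η ^ m * ((1 - a + η) * c ^ 2) := by
    intro m
    induction m with
    | zero => rw [hx0, hy0]; ring
    | succ p ih =>
      have e1 : x (p + 1) = a * x p - η * y p := hxr p
      have e2 : y (p + 1) = x p := hyr p
      calc x (p+1) ^ 2 - a * x (p+1) * y (p+1) + η * y (p+1) ^ 2
          = η * (x p ^ 2 - a * x p * y p + η * y p ^ 2) := by
            rw [e1, e2]; ring
        _ = η ^ (p + 1) * ((1 - a + η) * c ^ 2) := by rw [ih]; ring
  -- coercivity
  have hc1 : 0 < 8 - (4 * η - a ^ 2) := by nlinarith [sq_nonneg a]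
  have hc2 : 0 ≤ (8 - (4 * η - a ^ 2)) * (8 * η - (4 * η - a ^ 2)) - 16 * a ^ 2 := by
    nlinarith [mul_nonneg hD.le (by linarith : (0:ℝ) ≤ 8 - 4 * η - a ^ 2)]
  have hcoer : (4 * η - a ^ 2) * (x k ^ 2 + y k ^ 2)
      ≤ 8 * (x k ^ 2 - a * x k * y k + η * y k ^ 2) := by
    nlinarith [sq_nonneg ((8 - (4 * η - a ^ 2)) * x k - 4 * a * y k),
      mul_nonneg hc2 (sq_nonneg (y k)), hc1]
  -- final constant bound
  have hfin2 : 8 * ((1 - a + η) * c ^ 2) ≤ 14 * (4 * η - a ^ 2) * c ^ 2 := by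
    have := mul_nonneg (by linarith : 0 ≤ -(7 * a ^ 2 - 4 * a + 4 - 24 * η)) (sq_nonneg c)
    nlinarith [this]
  have hηk : (0:ℝ) ≤ η ^ k := by positivity
  have h3 : (4 * η - a ^ 2) * (x k ^ 2 + y k ^ 2)
      ≤ (4 * η - a ^ 2) * (14 * η ^ k * c ^ 2) := by
    calc (4 * η - a ^ 2) * (x k ^ 2 + y k ^ 2)
        ≤ 8 * (x k ^ 2 - a * x k * y k + η * y k ^ 2) := hcoer
      _ = 8 * (η ^ k * ((1 - a + η) * c ^ 2)) := by rw [hq k]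
      _ = η ^ k * (8 * ((1 - a + η) * c ^ 2)) := by ring
      _ ≤ η ^ k * (14 * (4 * η - a ^ 2) * c ^ 2) :=
          mul_le_mul_of_nonneg_left hfin2 hηk
      _ = (4 * η - a ^ 2) * (14 * η ^ k * c ^ 2) := by ring
  exact le_of_mul_le_mul_left h3 hD

lemma frobSq_eq_trace {n d : ℕ} (M : Matrix (Fin n) (Fin d) ℝ) :
    frobSq M = Matrix.trace (M.transpose * M) := by
  simp only [frobSq, Matrix.trace, Matrix.diag, Matrix.mul_apply, Matrix.transpose_apply, sq]
  rw [Finset.sum_comm]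

lemma frobSq_mul_orth {n d : ℕ} (U : Matrix (Fin n) (Fin n) ℝ)
    (hU : U.transpose * U = 1) (M : Matrix (Fin n) (Fin d) ℝ) :
    frobSq (U * M) = frobSq M := by
  rw [frobSq_eq_trace, frobSq_eq_trace, Matrix.transpose_mul, Matrix.mul_assoc,
    ← Matrix.mul_assoc U.transpose U M, hU, Matrix.one_mul]

/-- Loopless Chebyshev Acceleration lemma: with W symmetric, doubly stochastic,
positive semidefinite, whose eigenvalue 1 is simple (eigenvectors of 1 are the
constant vectors), 1−δ an eigenvalue, and all eigenvalues other than 1 lying in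
[0, 1−δ]; θ, η̃ as in the paper, W̃ the augmented matrix and Π̃ = diag(Π,Π):
‖Π̃ W̃^k Π̃ [A;A]‖_F² ≤ 14 η̃^k ‖ΠA‖_F². -/
theorem stmt15 {n d : ℕ} (hn : 2 ≤ n) (δ θ ηt : ℝ) (hδ0 : 0 < δ) (hδ1 : δ < 1)
    (W : Matrix (Fin n) (Fin n) ℝ)
    (hsymm : W.IsSymm) (hnonneg : ∀ i j, 0 ≤ W i j)
    (hrow : W.mulVec (fun _ => (1 : ℝ)) = fun _ => 1)
    (hcol : Matrix.vecMul (fun _ => (1 : ℝ)) W = fun _ => 1)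
    (hpsd : W.PosSemidef)
    (hsimple : ∀ v : Fin n → ℝ, W.mulVec v = v → ∃ c : ℝ, v = fun _ => c)
    (hsec : (1 - δ) ∈ spectrum ℝ W)
    (hspec : ∀ μ ∈ spectrum ℝ W, 0 ≤ μ ∧ (μ = 1 ∨ μ ≤ 1 - δ))
    (hθ : θ = (1 - Real.sqrt (1 - (1 - δ) ^ 2)) / (1 + Real.sqrt (1 - (1 - δ) ^ 2)))
    (hη : ηt = (1 + θ) / 2)
    (P : Matrix (Fin n) (Fin n) ℝ) (hP : P = 1 - Matrix.of fun _ _ => (1 : ℝ) / n)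
    (Wt : Matrix (Fin n ⊕ Fin n) (Fin n ⊕ Fin n) ℝ)
    (hWt : Wt = Matrix.fromBlocks ((1 + ηt) • W) (-(ηt • (1 : Matrix (Fin n) (Fin n) ℝ)))
      (1 : Matrix (Fin n) (Fin n) ℝ) 0)
    (Pt : Matrix (Fin n ⊕ Fin n) (Fin n ⊕ Fin n) ℝ)
    (hPt : Pt = Matrix.fromBlocks P 0 0 P)
    (A : Matrix (Fin n) (Fin d) ℝ) (k : ℕ) :
    frobSq (Pt * Wt ^ k * Pt * Matrix.of fun i j => A (Sum.elim id id i) j) ≤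
      14 * ηt ^ k * frobSq (P * A) := by
  -- scalar parameters
  have hw0 : (0:ℝ) < 1 - δ := by linarith
  have hw1 : 1 - δ < 1 := by linarith
  set s := Real.sqrt (1 - (1 - δ) ^ 2) with hs
  have hs2 : s ^ 2 = 1 - (1 - δ) ^ 2 := Real.sq_sqrt (by nlinarith)
  have hs0 : 0 < s := Real.sqrt_pos.mpr (by nlinarith)
  have hs1 : s < 1 := by nlinarith [hs2, hs0]
  have hne : (1:ℝ) + s ≠ 0 := by linarith
  have hηval : ηt = 1 / (1 + s) := by
    rw [hη, hθ]
    field_simp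
    ring
  have hη0 : 0 < ηt := by rw [hηval]; positivity
  -- basics about P
  have hn0 : (0:ℝ) < (n:ℝ) := by
    have : 0 < n := by omega
    exact_mod_cast this
  set K : Matrix (Fin n) (Fin n) ℝ := Matrix.of fun _ _ => (1:ℝ)/n with hK
  have hKK : K * K = K := by
    ext i j
    simp only [hK, Matrix.mul_apply, Matrix.of_apply]
    rw [Finset.sum_const, Finset.card_univ, Fintype.card_fin, nsmul_eq_mul]
    field_simp
  have hKW : K * W = K := by
    ext i j
    simp only [hK, Matrix.mul_apply, Matrix.of_apply]
    have hc := congrFun hcol j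
    simp only [Matrix.vecMul, dotProduct, one_mul] at hc
    rw [← Finset.mul_sum, hc, mul_one]
  have hWK : W * K = K := by
    ext i j
    simp only [hK, Matrix.mul_apply, Matrix.of_apply]
    have hr := congrFun hrow i
    simp only [Matrix.mulVec, dotProduct, mul_one] at hr
    rw [← Finset.sum_mul, hr, one_mul]
  have hPP : P * P = P := by
    rw [hP]
    have e : ((1:Matrix (Fin n) (Fin n) ℝ) - K) * (1 - K) = 1 - K - K + K * K := by
      noncomm_ring
    rw [e, hKK]; abel
  have hPW : P * W = W * P := by
    rw [hP, Matrix.sub_mul, Matrix.mul_sub, Matrix.one_mul, Matrix.mul_one, hKW, hWK]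
  -- block matrices
  have hPtPt : Pt * Pt = Pt := by
    rw [hPt, Matrix.fromBlocks_multiply]
    simp [hPP]
  have hPtWt : Pt * Wt = Wt * Pt := by
    rw [hPt, hWt, Matrix.fromBlocks_multiply, Matrix.fromBlocks_multiply]
    simp [Matrix.mul_smul, Matrix.smul_mul, hPW]
  have hcomm : Pt * Wt ^ k = Wt ^ k * Pt := (Commute.pow_right hPtWt k)
  have hred : Pt * Wt ^ k * Pt * (Matrix.of fun i j => A (Sum.elim id id i) j)
      = Wt ^ k * (Pt * (Matrix.of fun i j => A (Sum.elim id id i) j)) := by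
    rw [hcomm, Matrix.mul_assoc (Wt ^ k) Pt Pt, hPtPt, Matrix.mul_assoc]
  rw [hred]
  set B := P * A with hB
  -- stacking
  have hAA : (Matrix.of fun i j => A (Sum.elim id id i) j) = Matrix.fromRows A A := by
    ext i j
    cases i <;> rfl
  have hPtAA : Pt * (Matrix.of fun i j => A (Sum.elim id id i) j) = Matrix.fromRows B B := by
    rw [hAA, hPt, Matrix.fromBlocks_mul_fromRows]
    simp [hB]
  have hstep : ∀ X Y : Matrix (Fin n) (Fin d) ℝ,
      Wt * Matrix.fromRows X Y = Matrix.fromRows ((1 + ηt) • (W * X) - ηt • Y) X := by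
    intro X Y
    rw [hWt, Matrix.fromBlocks_mul_fromRows]
    simp only [Matrix.smul_mul, Matrix.neg_mul, Matrix.one_mul, Matrix.zero_mul,
      add_zero, ← sub_eq_add_neg]
  -- the two-block sequence
  set f : ℕ → Matrix (Fin n) (Fin d) ℝ × Matrix (Fin n) (Fin d) ℝ :=
    fun m => Nat.rec (B, B) (fun _ pr => ((1 + ηt) • (W * pr.1) - ηt • pr.2, pr.1)) m with hf
  have hf0 : f 0 = (B, B) := rfl
  have hfs : ∀ m, f (m+1) = ((1 + ηt) • (W * (f m).1) - ηt • (f m).2, (f m).1) :=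
    fun m => rfl
  have hstack : ∀ m, Wt ^ m * (Pt * (Matrix.of fun i j => A (Sum.elim id id i) j))
      = Matrix.fromRows (f m).1 (f m).2 := by
    intro m
    induction m with
    | zero => rw [pow_zero, Matrix.one_mul, hPtAA]; rfl
    | succ p ih =>
      rw [pow_succ', Matrix.mul_assoc, ih, hstep, hfs]
  rw [hstack k]
  have hsplit : ∀ X Y : Matrix (Fin n) (Fin d) ℝ,
      frobSq (Matrix.fromRows X Y) = frobSq X + frobSq Y := by
    intro X Y
    simp only [frobSq, Fintype.sum_sum_type, Matrix.fromRows, Matrix.of_apply,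
      Sum.elim_inl, Sum.elim_inr]
    rfl
  rw [hsplit]
  -- spectral decomposition
  have hW : W.IsHermitian := by
    rw [Matrix.IsHermitian, Matrix.conjTranspose_eq_transpose_of_trivial]
    exact hsymm
  set U : Matrix (Fin n) (Fin n) ℝ := (hW.eigenvectorUnitary : Matrix (Fin n) (Fin n) ℝ)
    with hUdef
  have hU1 : star U * U = 1 := Matrix.mem_unitaryGroup_iff'.mp hW.eigenvectorUnitary.2
  have hU2 : U * star U = 1 := Matrix.mem_unitaryGroup_iff.mp hW.eigenvectorUnitary.2
  have hUt : star U = U.transpose := by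
    ext i j
    simp [Matrix.star_apply]
  have hspecthm : W = U * Matrix.diagonal hW.eigenvalues * star U := by
    have h := hW.spectral_theorem
    simpa [RCLike.ofReal_real_eq_id] using h
  have hUW : star U * W = Matrix.diagonal hW.eigenvalues * star U := by
    conv_lhs => rw [hspecthm]
    rw [← Matrix.mul_assoc, ← Matrix.mul_assoc, hU1, Matrix.one_mul]
  -- column sums of B vanish
  have hPcol : ∀ y, ∑ x, P x y = 0 := by
    intro y
    simp only [hP, hK, Matrix.sub_apply, Matrix.one_apply, Matrix.of_apply,
      Finset.sum_sub_distrib]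
    rw [Finset.sum_ite_eq' Finset.univ y (fun _ => (1:ℝ))]
    simp only [Finset.mem_univ, if_true]
    rw [Finset.sum_const, Finset.card_univ, Fintype.card_fin, nsmul_eq_mul]
    field_simp
    norm_num
  have hBsum : ∀ j, ∑ x, B x j = 0 := by
    intro j
    rw [hB]
    simp only [Matrix.mul_apply]
    rw [Finset.sum_comm]
    have : ∀ y, ∑ x, P x y * A y j = (∑ x, P x y) * A y j := by
      intro y; rw [Finset.sum_mul]
    calc ∑ y, ∑ x, P x y * A y j = ∑ y : Fin n, (0 : ℝ) * A y j := by
          apply Finset.sum_congr rfl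
          intro y _
          rw [this y, hPcol y]
      _ = 0 := by simp
  -- eigenvector facts
  have heig : ∀ i, W.mulVec (fun x => U x i) = hW.eigenvalues i • (fun x => U x i) := by
    intro i
    have hv : (fun x => U x i) = ⇑(hW.eigenvectorBasis i) := by
      funext x
      rw [hUdef]
      exact hW.eigenvectorUnitary_apply x i
    rw [hv]
    exact hW.mulVec_eigenvectorBasis i
  -- the coordinates
  set C := star U * B with hC
  have hCzero : ∀ i, hW.eigenvalues i = 1 → ∀ j, C i j = 0 := by
    intro i h1 j
    obtain ⟨c, hc⟩ := hsimple (fun x => U x i) (by rw [heig i, h1, one_smul])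
    have e : C i j = ∑ x, U x i * B x j := by
      simp [hC, Matrix.mul_apply, Matrix.star_apply]
    rw [e]
    calc ∑ x, U x i * B x j = ∑ x, c * B x j := by
          apply Finset.sum_congr rfl
          intro x _
          rw [congrFun hc x]
      _ = c * ∑ x, B x j := by rw [Finset.mul_sum]
      _ = 0 := by rw [hBsum j, mul_zero]
  -- recurrences in coordinates
  have hErec : ∀ m, star U * (f (m+1)).1
      = (1 + ηt) • (Matrix.diagonal hW.eigenvalues * (star U * (f m).1))
        - ηt • (star U * (f m).2) := by
    intro m
    rw [hfs m]
    show star U * ((1 + ηt) • (W * (f m).1) - ηt • (f m).2) = _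
    rw [Matrix.mul_sub, Matrix.mul_smul, Matrix.mul_smul, ← Matrix.mul_assoc, hUW,
      Matrix.mul_assoc]
  have hGrec : ∀ m, star U * (f (m+1)).2 = star U * (f m).1 := by
    intro m
    rw [hfs m]
  -- per-entry bound
  have hperf : ∀ i j, ((star U * (f k).1) i j) ^ 2 + ((star U * (f k).2) i j) ^ 2
      ≤ 14 * ηt ^ k * (C i j) ^ 2 := by
    intro i j
    have hx0 : (star U * (f 0).1) i j = C i j := by rw [hf0, hC]
    have hy0 : (star U * (f 0).2) i j = C i j := by rw [hf0, hC]
    have hxr : ∀ m, (star U * (f (m+1)).1) i j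
        = (1 + ηt) * hW.eigenvalues i * ((star U * (f m).1) i j)
          - ηt * ((star U * (f m).2) i j) := by
      intro m
      have := congrFun (congrFun (hErec m) i) j
      simpa [Matrix.sub_apply, Matrix.smul_apply, Matrix.diagonal_mul, smul_eq_mul,
        mul_assoc] using this
    have hyr : ∀ m, (star U * (f (m+1)).2) i j = (star U * (f m).1) i j := by
      intro m
      rw [hGrec m]
    rcases hspec (hW.eigenvalues i) (hW.eigenvalues_mem_spectrum_real i) with ⟨hm0, hm1⟩
    rcases hm1 with h1 | hle
    · -- eigenvalue 1 : component is zero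
      have hc0 : C i j = 0 := hCzero i h1 j
      have hz := scalarZero ((1 + ηt) * hW.eigenvalues i) ηt
        (fun m => (star U * (f m).1) i j) (fun m => (star U * (f m).2) i j)
        (by show (star U * (f 0).1) i j = 0; rw [hx0, hc0])
        (by show (star U * (f 0).2) i j = 0; rw [hy0, hc0]) hxr hyr k
      rw [hc0, (hz).1, (hz).2]
      norm_num
    · -- eigenvalue ≤ 1 - δ
      exact scalarKey s ηt (1 - δ) (hW.eigenvalues i) (C i j) hs0 hs1 hw0
        (by linarith [hs2]) hηval hm0 hle
        (fun m => (star U * (f m).1) i j) (fun m => (star U * (f m).2) i j)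
        hx0 hy0 hxr hyr k
  -- summation
  have horth : (star U).transpose * star U = 1 := by
    rw [hUt, Matrix.transpose_transpose, ← hUt, hU2]
  have hfq1 : frobSq (f k).1 = frobSq (star U * (f k).1) :=
    (frobSq_mul_orth (star U) horth _).symm
  have hfq2 : frobSq (f k).2 = frobSq (star U * (f k).2) :=
    (frobSq_mul_orth (star U) horth _).symm
  have hfqC : frobSq C = frobSq B := by
    rw [hC]
    exact frobSq_mul_orth (star U) horth B
  rw [hfq1, hfq2, ← hfqC]
  calc frobSq (star U * (f k).1) + frobSq (star U * (f k).2)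
      = ∑ i, ∑ j, (((star U * (f k).1) i j) ^ 2 + ((star U * (f k).2) i j) ^ 2) := by
        simp [frobSq, Finset.sum_add_distrib]
    _ ≤ ∑ i, ∑ j, 14 * ηt ^ k * (C i j) ^ 2 := by
        apply Finset.sum_le_sum
        intro i _
        apply Finset.sum_le_sum
        intro j _
        exact hperf i j
    _ = 14 * ηt ^ k * frobSq C := by
        rw [frobSq, Finset.mul_sum]
        apply Finset.sum_congr rfl
        intro i _
        rw [Finset.mul_sum]
end
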